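/- Let Θ : B* → B* be an involutive antimorphism and let v ∈ B^ℕ be an infinite word. Suppose that: (i) for every non-empty factor w of v, every factor of v that begins with w, ends with Θ(w), and contains no other occurrence of w or of Θ(w), is a Θ-palindrome; and (ii) for every letter b ∈ B with b ≠ Θ(b), the occurrences of b and of Θ(b) in v alternate. Then v is Θ-rich. -/
import Mathlib


/-!
Basic notions from combinatorics on words: involutive antimorphisms,
Θ-palindromes, factors of infinite words, palindromic defect, richness.
-/

/-- `Θ` is an involutive antimorphism of the free monoid `A*` (words as lists). -/
def IsAntimorphism {A : Type*} (Θ : List A → List A) : Prop :=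
  (∀ x y : List A, Θ (x ++ y) = Θ y ++ Θ x) ∧ ∀ x : List A, Θ (Θ x) = x

/-- The factor `u_i u_{i+1} … u_{i+n-1}` of the infinite word `u`. -/
def factorAt {A : Type*} (u : ℕ → A) (i n : ℕ) : List A :=
  (List.range n).map fun k => u (i + k)

/-- `i` is an occurrence of `w` in the infinite word `u`. -/
def OccursAt {A : Type*} (u : ℕ → A) (w : List A) (i : ℕ) : Prop :=
  w = factorAt u i w.length

/-- `w` is a factor of the infinite word `u`. -/
def IsFactorOf {A : Type*} (w : List A) (u : ℕ → A) : Prop :=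
  ∃ i, OccursAt u w i

/-- The prefix of length `n` of the infinite word `u`. -/
def prefixWord {A : Type*} (u : ℕ → A) (n : ℕ) : List A :=
  factorAt u 0 n

/-- `u` is recurrent: every factor has infinitely many occurrences. -/
def Recurrent {A : Type*} (u : ℕ → A) : Prop :=
  ∀ w, IsFactorOf w u → ∀ N, ∃ i, N ≤ i ∧ OccursAt u w i

/-- `u` is uniformly recurrent: every factor occurs with bounded gaps
(equivalently, every factor has finitely many return words). -/
def UniformlyRecurrent {A : Type*} (u : ℕ → A) : Prop :=
  ∀ w, IsFactorOf w u → ∃ R, ∀ N, ∃ i, N ≤ i ∧ i < N + R ∧ OccursAt u w i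

/-- `i` is an occurrence of the word `s` in the finite word `r`. -/
def OccursIn {A : Type*} (s r : List A) (i : ℕ) : Prop :=
  i + s.length ≤ r.length ∧ s = (r.drop i).take s.length

/-- `s` occurs exactly once in `r`. -/
def Unioccurrent {A : Type*} (s r : List A) : Prop :=
  Set.ncard {i | OccursIn s r i} = 1

/-- The set `Pal_Θ(w)` of `Θ`-palindromic factors of the finite word `w`
(the empty word included). -/
def palSet {A : Type*} (Θ : List A → List A) (w : List A) : Set (List A) :=
  {p | p <:+: w ∧ Θ p = p}

/-- `γ_Θ(w)`: the number of pairs `{a, Θ(a)}` where `a` is a letter occurring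
in `w` with `a ≠ Θ(a)`. -/
noncomputable def gammaTheta {A : Type*} (Θ : List A → List A) (w : List A) : ℕ :=
  Set.ncard {P : Set A | ∃ a, a ∈ w ∧ Θ [a] ≠ [a] ∧ P = {b | [b] = [a] ∨ [b] = Θ [a]}}

/-- The `Θ`-palindromic defect `D_Θ(w) = |w| + 1 - γ_Θ(w) - #Pal_Θ(w)` of a finite word. -/
noncomputable def defect {A : Type*} (Θ : List A → List A) (w : List A) : ℤ :=
  (w.length : ℤ) + 1 - gammaTheta Θ w - (palSet Θ w).ncard

/-- The infinite word `u` has finite `Θ`-palindromic defect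
(`D_Θ(u) = sup { D_Θ(w) : w factor of u } < ∞`), i.e. `u` is almost `Θ`-rich. -/
def FiniteDefect {A : Type*} (Θ : List A → List A) (u : ℕ → A) : Prop :=
  ∃ C : ℤ, ∀ w, IsFactorOf w u → defect Θ w ≤ C

/-- The infinite word `u` is `Θ`-rich: every factor `w` satisfies
`#Pal_Θ(w) = |w| + 1 - γ_Θ(w)`, i.e. has zero `Θ`-defect. -/
def RichWord {A : Type*} (Θ : List A → List A) (u : ℕ → A) : Prop :=
  ∀ w, IsFactorOf w u → defect Θ w = 0

/-- The language of `u` is closed under `Θ`. -/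
def LangClosedUnder {A : Type*} (Θ : List A → List A) (u : ℕ → A) : Prop :=
  ∀ w, IsFactorOf w u → IsFactorOf (Θ w) u

/-- `u` is the image of the infinite word `v` under the monoid morphism
`B* → A*` determined by `φ` on letters, i.e. `u = φ(v₀)φ(v₁)φ(v₂)…`. -/
def IsMorphicImage {A B : Type*} (u : ℕ → A) (φ : B → List A) (v : ℕ → B) : Prop :=
  (∀ n, OccursAt u ((prefixWord v n).flatMap φ) 0) ∧
    ∀ N, ∃ n, N ≤ ((prefixWord v n).flatMap φ).length

/-- The occurrences of `w` and `w'` in `u` alternate: listing in increasing order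
all occurrences of `w` or `w'`, consecutive indices are alternately occurrences
of `w` and of `w'` (between two occurrences of one of them, the second of which is
not an occurrence of the other, there is an occurrence of the other). -/
def AlternateIn {A : Type*} (u : ℕ → A) (w w' : List A) : Prop :=
  (∀ i j, i < j → OccursAt u w i → OccursAt u w j → ¬ OccursAt u w' j →
    ∃ k, i < k ∧ k < j ∧ OccursAt u w' k) ∧
  (∀ i j, i < j → OccursAt u w' i → OccursAt u w' j → ¬ OccursAt u w j →
    ∃ k, i < k ∧ k < j ∧ OccursAt u w k)

/-- Factor complexity `C(n)` of the infinite word `u`. -/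
noncomputable def complexity {A : Type*} (u : ℕ → A) (n : ℕ) : ℕ :=
  Set.ncard {w : List A | IsFactorOf w u ∧ w.length = n}

/-- `Θ`-palindromic complexity `P_Θ(n)` of the infinite word `u`. -/
noncomputable def palComplexity {A : Type*} (Θ : List A → List A) (u : ℕ → A) (n : ℕ) : ℕ :=
  Set.ncard {w : List A | IsFactorOf w u ∧ w.length = n ∧ Θ w = w}

/-- `r` is a complete return word of `w` in `u`: a factor of `u` with exactly two
occurrences of `w`, one as a prefix and one as a suffix. -/
def IsCompleteReturnWord {A : Type*} (u : ℕ → A) (w r : List A) : Prop :=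
  IsFactorOf r u ∧ w <+: r ∧ w <:+ r ∧ Set.ncard {i | OccursIn w r i} = 2

section RichAux
variable {B : Type*}

lemma theta_nil {Θ : List B → List B} (hΘ : IsAntimorphism Θ) : Θ [] = [] := by
  have h := hΘ.1 [] []
  simp at h
  have := congrArg List.length h
  simp at this
  exact this

lemma theta_ne_nil {Θ : List B → List B} (hΘ : IsAntimorphism Θ) {l : List B} (hl : l ≠ []) :
    Θ l ≠ [] := by
  intro h
  apply hl
  have := congrArg Θ h
  rw [hΘ.2, theta_nil hΘ] at this
  exact this

lemma theta_singleton {Θ : List B → List B} (hΘ : IsAntimorphism Θ) (a : B) :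
    ∃ c, Θ [a] = [c] := by
  rcases h : Θ [a] with _ | ⟨c, t⟩
  · exact absurd h (theta_ne_nil hΘ (by simp))
  rcases t with _ | ⟨d, t'⟩
  · exact ⟨c, rfl⟩
  · exfalso
    have h2 : Θ (Θ [a]) = [a] := hΘ.2 [a]
    rw [h] at h2
    have : Θ (c :: d :: t') = Θ (d :: t') ++ Θ [c] := by
      have := hΘ.1 [c] (d :: t'); simpa using this
    rw [this] at h2
    have hc : Θ [c] ≠ [] := theta_ne_nil hΘ (by simp)
    have hd : Θ (d :: t') ≠ [] := theta_ne_nil hΘ (by simp)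
    have := congrArg List.length h2
    simp [List.length_append] at this
    rcases List.exists_cons_of_ne_nil hc with ⟨x, xs, hx⟩
    rcases List.exists_cons_of_ne_nil hd with ⟨y, ys, hy⟩
    rw [hx, hy] at this
    simp at this
    omega

lemma theta_length {Θ : List B → List B} (hΘ : IsAntimorphism Θ) (l : List B) :
    (Θ l).length = l.length := by
  induction l with
  | nil => simp [theta_nil hΘ]
  | cons a t ih =>
    have h : Θ (a :: t) = Θ t ++ Θ [a] := by
      have := hΘ.1 [a] t; simpa using this
    obtain ⟨c, hc⟩ := theta_singleton hΘ a
    rw [h, hc]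
    simp [ih]

@[simp] lemma factorAt_length {u : ℕ → B} {i n : ℕ} : (factorAt u i n).length = n := by
  simp [factorAt]

@[simp] lemma factorAt_getElem {u : ℕ → B} {i n j : ℕ} (h : j < n) :
    (factorAt u i n)[j]'(by simpa using h) = u (i + j) := by
  simp [factorAt]

lemma factorAt_succ {u : ℕ → B} {i n : ℕ} :
    factorAt u i (n + 1) = factorAt u i n ++ [u (i + n)] := by
  simp [factorAt, List.range_succ]

lemma factorAt_drop {u : ℕ → B} {i n k : ℕ} :
    (factorAt u i n).drop k = factorAt u (i + k) (n - k) := by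
  apply List.ext_getElem
  · simp
  · intro j h1 h2
    rw [List.getElem_drop]
    rw [factorAt_getElem (by simp at h1 ⊢; omega), factorAt_getElem (by simp at h2; omega)]
    ring_nf

lemma factorAt_take {u : ℕ → B} {i n k : ℕ} (h : k ≤ n) :
    (factorAt u i n).take k = factorAt u i k := by
  apply List.ext_getElem
  · simp; omega
  · intro j h1 h2
    rw [List.getElem_take]
    rw [factorAt_getElem (by simp at h1; omega), factorAt_getElem (by simp at h2; omega)]

lemma factorAt_one {u : ℕ → B} {i : ℕ} : factorAt u i 1 = [u i] := by
  have : List.range 1 = [0] := rfl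
  simp [factorAt, this]

lemma occursAt_singleton {u : ℕ → B} {a : B} {m : ℕ} :
    OccursAt u [a] m ↔ u m = a := by
  simp [OccursAt, factorAt_one, eq_comm]

lemma mem_factorAt {u : ℕ → B} {i n : ℕ} {a : B} :
    a ∈ factorAt u i n ↔ ∃ k, k < n ∧ u (i + k) = a := by
  simp [factorAt, eq_comm]

lemma occursIn_factorAt {u : ℕ → B} {i n j : ℕ} {w : List B} :
    OccursIn w (factorAt u i n) j ↔ j + w.length ≤ n ∧ w = factorAt u (i + j) w.length := by
  constructor
  · rintro ⟨h1, h2⟩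
    simp at h1
    refine ⟨h1, ?_⟩
    rw [factorAt_drop, factorAt_take (by omega)] at h2
    exact h2
  · rintro ⟨h1, h2⟩
    refine ⟨by simpa using h1, ?_⟩
    rw [factorAt_drop, factorAt_take (by omega)]
    exact h2

lemma occursIn_iff_infix {w r : List B} : (∃ j, OccursIn w r j) ↔ w <:+: r := by
  constructor
  · rintro ⟨j, h1, h2⟩
    rw [h2]
    exact ((r.drop j).take_prefix w.length).isInfix.trans (r.drop_suffix j).isInfix
  · rintro ⟨s, t, hst⟩
    refine ⟨s.length, ?_, ?_⟩
    · have := congrArg List.length hst; simp at this; omega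
    · rw [← hst]
      simp [List.drop_append, List.take_append]

end RichAux

section RichAux2
variable {B : Type*}

lemma palSet_finite (Θ : List B → List B) (w : List B) : (palSet Θ w).Finite := by
  apply Set.Finite.subset (List.finite_toSet w.sublists)
  rintro p ⟨hp, -⟩
  exact List.mem_sublists.2 hp.sublist

lemma nil_mem_palSet {Θ : List B → List B} (hΘ : IsAntimorphism Θ) (w : List B) :
    ([] : List B) ∈ palSet Θ w :=
  ⟨List.nil_infix, theta_nil hΘ⟩

lemma palSet_nil {Θ : List B → List B} (hΘ : IsAntimorphism Θ) :
    palSet Θ ([] : List B) = {[]} := by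
  ext p
  simp only [palSet, Set.mem_setOf_eq, Set.mem_singleton_iff]
  constructor
  · rintro ⟨hp, -⟩; exact List.infix_nil.mp hp
  · rintro rfl; exact ⟨List.nil_infix, theta_nil hΘ⟩

lemma palSet_mono {Θ : List B → List B} {q f : List B} (h : q <:+: f) :
    palSet Θ q ⊆ palSet Θ f := fun _p hp => ⟨hp.1.trans h, hp.2⟩

/-- A palindromic factor of `q ++ [b]` that is not a factor of `q` is a suffix. -/
lemma new_infix_suffix {q : List B} {b : B} {p : List B}
    (h1 : p <:+: q ++ [b]) (h2 : ¬ p <:+: q) : p <:+ q ++ [b] := by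
  obtain ⟨s, t, hst⟩ := h1
  rcases t.eq_nil_or_concat with rfl | ⟨t', c, rfl⟩
  · exact ⟨s, by simpa using hst⟩
  · exfalso
    apply h2
    have : (s ++ p ++ t') ++ [c] = q ++ [b] := by simpa [List.append_assoc] using hst
    have hq : s ++ p ++ t' = q := by
      have := List.append_inj' this (by rfl)
      exact this.1
    exact ⟨s, t', by simpa [List.append_assoc] using hq⟩

/-- Among palindromic factors of `q ++ [b]` that are not factors of `q`,
there is at most one. -/
lemma new_pal_unique {Θ : List B → List B} (hΘ : IsAntimorphism Θ) {q : List B} {b : B}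
    {p₁ p₂ : List B} (h1 : p₁ ∈ palSet Θ (q ++ [b])) (h1' : p₁ ∉ palSet Θ q)
    (h2 : p₂ ∈ palSet Θ (q ++ [b])) (h2' : p₂ ∉ palSet Θ q) : p₁ = p₂ := by
  have key : ∀ p p' : List B, p ∈ palSet Θ (q ++ [b]) → p ∉ palSet Θ q →
      p' ∈ palSet Θ (q ++ [b]) → p' ∉ palSet Θ q → p <:+ p' → p = p' := by
    intro p p' hp hpn hp' hpn' hsuf
    by_contra hne
    obtain ⟨x, hx⟩ := hsuf
    have hxne : x ≠ [] := by rintro rfl; simp at hx; exact hne hx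
    -- p' = x ++ p, and Θ p' = p', so p' = p ++ Θ x
    have hform : p' = p ++ Θ x := by
      have h5 : Θ p' = p ++ Θ x := by rw [← hx, hΘ.1 x p, hp.2]
      rw [← hp'.2, h5]
    have hΘx : Θ x ≠ [] := theta_ne_nil hΘ hxne
    -- p' is a suffix of q ++ [b]
    have hp'suf : p' <:+ q ++ [b] := new_infix_suffix hp'.1 (fun hc => hpn' ⟨hc, hp'.2⟩)
    obtain ⟨y, hy⟩ := hp'suf
    apply hpn
    refine ⟨?_, hp.2⟩
    -- q ++ [b] = y ++ p ++ Θ x  with Θ x ≠ []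
    rcases (Θ x).eq_nil_or_concat with hnil | ⟨z, c, hzc⟩
    · exact absurd hnil hΘx
    · rw [hzc] at hform
      have : (y ++ p ++ z) ++ [c] = q ++ [b] := by
        rw [← hy, hform]; simp [List.append_assoc]
      have hq : y ++ p ++ z = q := (List.append_inj' this rfl).1
      exact ⟨y, z, by simpa [List.append_assoc] using hq⟩
  rcases List.suffix_or_suffix_of_suffix
      (new_infix_suffix h1.1 (fun hc => h1' ⟨hc, h1.2⟩))
      (new_infix_suffix h2.1 (fun hc => h2' ⟨hc, h2.2⟩)) with h | h
  · exact key _ _ h1 h1' h2 h2' h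
  · exact (key _ _ h2 h2' h1 h1' h).symm

end RichAux2

section RichAux3
variable {B : Type*}

lemma gammaSet_finite (Θ : List B → List B) (w : List B) :
    {P : Set B | ∃ a, a ∈ w ∧ Θ [a] ≠ [a] ∧ P = {b | [b] = [a] ∨ [b] = Θ [a]}}.Finite := by
  apply Set.Finite.subset ((w.finite_toSet).image
    (fun a => {b | [b] = [a] ∨ [b] = Θ [a]}))
  rintro P ⟨a, ha, -, rfl⟩
  exact ⟨a, ha, rfl⟩

lemma gamma_nil (Θ : List B → List B) : gammaTheta Θ ([] : List B) = 0 := by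
  have h : {P : Set B | ∃ a, a ∈ ([] : List B) ∧ Θ [a] ≠ [a] ∧ P = {b | [b] = [a] ∨ [b] = Θ [a]}} = ∅ := by
    ext P; simp
  unfold gammaTheta
  rw [h, Set.ncard_empty]

lemma gamma_append_same {Θ : List B → List B} (hΘ : IsAntimorphism Θ) {q : List B} {b b' : B}
    (hb' : Θ [b] = [b'])
    (hcase : Θ [b] = [b] ∨ b ∈ q ∨ b' ∈ q) :
    gammaTheta Θ (q ++ [b]) = gammaTheta Θ q := by
  unfold gammaTheta
  congr 1
  ext P
  simp only [Set.mem_setOf_eq, List.mem_append, List.mem_singleton]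
  constructor
  · rintro ⟨a, ha, hane, rfl⟩
    rcases ha with ha | rfl
    · exact ⟨a, ha, hane, rfl⟩
    · rcases hcase with h | h | h
      · exact absurd h hane
      · exact ⟨a, h, hane, rfl⟩
      · -- witness b'
        have hΘb' : Θ [b'] = [a] := by rw [← hb', hΘ.2]
        have hne' : Θ [b'] ≠ [b'] := by
          rw [hΘb']
          intro hc
          rw [← hc] at hb'
          exact hane hb'
        refine ⟨b', h, hne', ?_⟩
        ext c
        simp only [Set.mem_setOf_eq, hb', hΘb']
        tauto
  · rintro ⟨a, ha, hane, rfl⟩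
    exact ⟨a, Or.inl ha, hane, rfl⟩

lemma gamma_append_new {Θ : List B → List B} {q : List B} {b b' : B}
    (hb' : Θ [b] = [b'])
    (hne : Θ [b] ≠ [b]) (hbq : b ∉ q) (hb'q : b' ∉ q) :
    gammaTheta Θ (q ++ [b]) = gammaTheta Θ q + 1 := by
  unfold gammaTheta
  have hset : {P : Set B | ∃ a, a ∈ q ++ [b] ∧ Θ [a] ≠ [a] ∧ P = {c | [c] = [a] ∨ [c] = Θ [a]}}
      = insert {c | [c] = [b] ∨ [c] = Θ [b]}
          {P : Set B | ∃ a, a ∈ q ∧ Θ [a] ≠ [a] ∧ P = {c | [c] = [a] ∨ [c] = Θ [a]}} := by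
    ext P
    simp only [Set.mem_setOf_eq, List.mem_append, List.mem_singleton, Set.mem_insert_iff]
    constructor
    · rintro ⟨a, ha, hane, rfl⟩
      rcases ha with ha | rfl
      · exact Or.inr ⟨a, ha, hane, rfl⟩
      · exact Or.inl rfl
    · rintro (rfl | ⟨a, ha, hane, rfl⟩)
      · exact ⟨b, Or.inr rfl, hne, rfl⟩
      · exact ⟨a, Or.inl ha, hane, rfl⟩
  rw [hset]
  rw [Set.ncard_insert_of_notMem ?notmem (gammaSet_finite Θ q)]
  case notmem =>
    rintro ⟨a, haq, -, hP⟩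
    have haa : a ∈ {c | [c] = [a] ∨ [c] = Θ [a]} := Or.inl rfl
    rw [← hP] at haa
    rcases haa with h | h
    · have : a = b := by simpa using h
      exact hbq (this ▸ haq)
    · rw [hb'] at h
      have : a = b' := by simpa using h
      exact hb'q (this ▸ haq)

lemma no_new_pal_newpair {Θ : List B → List B} (hΘ : IsAntimorphism Θ) {q : List B} {b b' : B}
    (hb' : Θ [b] = [b']) (hne : Θ [b] ≠ [b]) (hbq : b ∉ q) (hb'q : b' ∉ q) :
    palSet Θ (q ++ [b]) = palSet Θ q := by
  apply Set.Subset.antisymm _ (palSet_mono ⟨[], [b], by simp⟩)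
  rintro p ⟨hinf, hpal⟩
  by_contra hnotin
  have hninf : ¬ p <:+: q := fun hc => hnotin ⟨hc, hpal⟩
  have hsuf : p <:+ q ++ [b] := new_infix_suffix hinf hninf
  have hpne : p ≠ [] := by rintro rfl; exact hninf List.nil_infix
  rcases p.eq_nil_or_concat with rfl | ⟨s, c, rfl⟩
  · exact hpne rfl
  simp only [List.concat_eq_append] at hpal hninf hinf hsuf
  obtain ⟨y, hy⟩ := hsuf
  have hcb : c = b := by
    have : (y ++ s) ++ [c] = q ++ [b] := by simpa [List.append_assoc] using hy
    have := (List.append_inj' this rfl).2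
    simpa using this
  subst hcb
  have hpform : s ++ [c] = Θ [c] ++ Θ s := by
    conv_lhs => rw [← hpal, hΘ.1]
  rw [hb'] at hpform
  have hb'mem : b' ∈ s ++ [c] := by rw [hpform]; simp
  have : b' ∈ q ++ [c] := hinf.mem hb'mem
  rcases List.mem_append.mp this with h | h
  · exact hb'q h
  · have : b' = c := by simpa using h
    apply hne
    rw [hb', this]
end RichAux3

section RichAux4
variable {B : Type*}

lemma exists_pal_suffix {Θ : List B → List B} (hΘ : IsAntimorphism Θ) {v : ℕ → B}
    (h1 : ∀ w : List B, IsFactorOf w v → w ≠ [] →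
      ∀ f : List B, IsFactorOf f v → w <+: f → Θ w <:+ f →
        (∀ i : ℕ, OccursIn w f i ∨ OccursIn (Θ w) f i → i = 0 ∨ i = f.length - w.length) →
        Θ f = f)
    (h2 : ∀ b : B, [b] ≠ Θ [b] → AlternateIn v [b] (Θ [b]))
    {i m : ℕ} {b' : B} (hb' : Θ [v (i + m)] = [b'])
    (hcase : Θ [v (i + m)] = [v (i + m)] ∨ v (i + m) ∈ factorAt v i m ∨ b' ∈ factorAt v i m) :
    ∃ k, k < m + 1 ∧ Θ ((factorAt v i (m+1)).drop k) = (factorAt v i (m+1)).drop k := by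
  classical
  set b := v (i + m) with hb
  by_cases hpal : Θ [b] = [b]
  · refine ⟨m, by omega, ?_⟩
    rw [factorAt_drop]
    have e : m + 1 - m = 1 := by omega
    rw [e, factorAt_one, ← hb, hpal]
  have hbb' : b' ≠ b := by rintro rfl; exact hpal hb'
  have halt := h2 b (by rw [hb']; simp [hbb'.symm])
  have hex : ∃ k, k < m ∧ v (i + k) = b' := by
    rcases hcase with h | h | h
    · exact absurd h hpal
    · obtain ⟨k, hk, hvk⟩ := mem_factorAt.mp h
      have hocc1 : OccursAt v [b] (i + k) := occursAt_singleton.mpr hvk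
      have hocc2 : OccursAt v [b] (i + m) := occursAt_singleton.mpr rfl
      have hnocc : ¬ OccursAt v (Θ [b]) (i + m) := by
        rw [hb', occursAt_singleton]
        exact fun hc => hbb' hc.symm
      obtain ⟨mm, hmm1, hmm2, hmm3⟩ := halt.1 (i + k) (i + m) (by omega) hocc1 hocc2 hnocc
      rw [hb', occursAt_singleton] at hmm3
      exact ⟨mm - i, by omega, by rw [show i + (mm - i) = mm by omega]; exact hmm3⟩
    · exact mem_factorAt.mp h
  obtain ⟨k, hkm, hvk⟩ := hex
  have hm1 : 1 ≤ m := by omega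
  set k₀ := Nat.findGreatest (fun j => v (i + j) = b') (m - 1) with hk₀def
  have hk₀P : v (i + k₀) = b' := by
    rw [hk₀def]
    exact Nat.findGreatest_spec (P := fun j => v (i + j) = b') (m := k) (n := m - 1)
      (by omega) hvk
  have hk₀le : k₀ ≤ m - 1 := by
    rw [hk₀def]; exact Nat.findGreatest_le (m - 1)
  have hmax : ∀ j, k₀ < j → j ≤ m - 1 → v (i + j) ≠ b' := by
    intro j hj1 hj2
    rw [hk₀def] at hj1
    exact Nat.findGreatest_is_greatest (P := fun j => v (i + j) = b') hj1 hj2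
  set g := factorAt v (i + k₀) (m + 1 - k₀) with hgdef
  have hglen : g.length = m + 1 - k₀ := factorAt_length
  have hθb' : Θ [b'] = [b] := by rw [← hb', hΘ.2]
  have hΘg : Θ g = g := by
    apply h1 [b'] ⟨i + k₀, by
        show [b'] = factorAt v (i + k₀) ([b'] : List B).length
        rw [show ([b'] : List B).length = 1 from rfl, factorAt_one, hk₀P]⟩
      (by simp) g ⟨i + k₀, by show g = factorAt v (i + k₀) g.length; rw [hglen]⟩
    · -- prefix
      have htake : g.take 1 = [b'] := by
        rw [hgdef, factorAt_take (by omega), factorAt_one, hk₀P]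
      have := List.take_prefix 1 g
      rwa [htake] at this
    · -- suffix
      have hdrop : g.drop (m - k₀) = [b] := by
        rw [hgdef, factorAt_drop]
        have e1 : i + k₀ + (m - k₀) = i + m := by omega
        have e2 : m + 1 - k₀ - (m - k₀) = 1 := by omega
        rw [e1, e2, factorAt_one]
      rw [hθb']
      have := List.drop_suffix (m - k₀) g
      rwa [hdrop] at this
    · -- occurrences
      intro j hj
      have hlen1 : ([b'] : List B).length = 1 := rfl
      rw [hlen1, hglen]
      rcases hj with hj | hj
      · rw [hgdef] at hj
        obtain ⟨hle, heq⟩ := occursIn_factorAt.mp hj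
        rw [hlen1, factorAt_one] at heq
        have hveq : v (i + k₀ + j) = b' := by simpa [eq_comm] using heq
        rw [hlen1] at hle
        by_contra hcon
        push_neg at hcon
        obtain ⟨hj0, hjlast⟩ := hcon
        have : k₀ + j ≤ m - 1 := by omega
        exact hmax (k₀ + j) (by omega) this (by rw [← add_assoc]; exact hveq)
      · rw [hθb', hgdef] at hj
        obtain ⟨hle, heq⟩ := occursIn_factorAt.mp hj
        rw [show ([b] : List B).length = 1 from rfl, factorAt_one] at heq
        have hveq : v (i + k₀ + j) = b := by simpa [eq_comm] using heq
        rw [show ([b] : List B).length = 1 from rfl] at hle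
        by_contra hcon
        push_neg at hcon
        obtain ⟨hj0, hjlast⟩ := hcon
        have hjlt : k₀ + j < m := by omega
        have hjpos : 0 < j := by
          rcases Nat.eq_zero_or_pos j with rfl | h
          · exfalso; apply hbb'; rw [← hk₀P]; simpa using hveq
          · exact h
        have hocc1 : OccursAt v [b] (i + k₀ + j) := occursAt_singleton.mpr hveq
        have hocc2 : OccursAt v [b] (i + m) := occursAt_singleton.mpr rfl
        have hnocc : ¬ OccursAt v (Θ [b]) (i + m) := by
          rw [hb', occursAt_singleton]
          exact fun hc => hbb' hc.symm
        obtain ⟨mm, hmm1, hmm2, hmm3⟩ := halt.1 (i + k₀ + j) (i + m) (by omega) hocc1 hocc2 hnocc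
        rw [hb', occursAt_singleton] at hmm3
        exact hmax (mm - i) (by omega) (by omega) (by rw [show i + (mm - i) = mm by omega]; exact hmm3)
  refine ⟨k₀, by omega, ?_⟩
  rw [factorAt_drop]
  exact hΘg

end RichAux4

section RichAux5
variable {B : Type*}

lemma exists_new_pal {Θ : List B → List B} (hΘ : IsAntimorphism Θ) {v : ℕ → B}
    (h1 : ∀ w : List B, IsFactorOf w v → w ≠ [] →
      ∀ f : List B, IsFactorOf f v → w <+: f → Θ w <:+ f →
        (∀ i : ℕ, OccursIn w f i ∨ OccursIn (Θ w) f i → i = 0 ∨ i = f.length - w.length) →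
        Θ f = f)
    {i m : ℕ}
    (hex : ∃ k, k < m + 1 ∧ Θ ((factorAt v i (m+1)).drop k) = (factorAt v i (m+1)).drop k) :
    ∃ p, p ∈ palSet Θ (factorAt v i (m + 1)) ∧ p ∉ palSet Θ (factorAt v i m) := by
  classical
  set F := factorAt v i (m + 1) with hF
  set k₁ := Nat.find hex with hk₁def
  obtain ⟨hk₁lt, hk₁pal⟩ := Nat.find_spec hex
  have hk₁min : ∀ j, j < k₁ → ¬ (j < m + 1 ∧ Θ (F.drop j) = F.drop j) := by
    intro j hj
    rw [hk₁def] at hj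
    exact Nat.find_min hex hj
  set p := F.drop k₁ with hpdef
  have hFlen : F.length = m + 1 := factorAt_length
  have hplen : p.length = m + 1 - k₁ := by rw [hpdef, List.length_drop, hFlen]
  have hpfac : p = factorAt v (i + k₁) (m + 1 - k₁) := by
    rw [hpdef, hF, factorAt_drop]
  have hpne : p ≠ [] := by
    intro hc
    rw [hc] at hplen
    simp at hplen
    omega
  refine ⟨p, ⟨(List.drop_suffix k₁ F).isInfix, hk₁pal⟩, ?_⟩
  rintro ⟨hinf, -⟩
  obtain ⟨j, hj⟩ := occursIn_iff_infix.mpr hinf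
  obtain ⟨hle, heq⟩ := occursIn_factorAt.mp hj
  have hjk : j < k₁ := by rw [hplen] at hle; omega
  set m₀ := Nat.findGreatest (fun j => p = factorAt v (i + j) p.length) (k₁ - 1) with hm₀def
  have hm₀P : p = factorAt v (i + m₀) p.length := by
    rw [hm₀def]
    exact Nat.findGreatest_spec (P := fun j => p = factorAt v (i + j) p.length)
      (m := j) (n := k₁ - 1) (by omega) (by rw [hplen] at heq ⊢; exact heq)
  have hm₀le : m₀ ≤ k₁ - 1 := by rw [hm₀def]; exact Nat.findGreatest_le (k₁ - 1)
  have hm₀max : ∀ j', m₀ < j' → j' ≤ k₁ - 1 → ¬ p = factorAt v (i + j') p.length := by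
    intro j' h1' h2'
    rw [hm₀def] at h1'
    exact Nat.findGreatest_is_greatest (P := fun j => p = factorAt v (i + j) p.length) h1' h2'
  have hm₀k₁ : m₀ < k₁ := by omega
  set g' := factorAt v (i + m₀) (m + 1 - m₀) with hg'def
  have hg'len : g'.length = m + 1 - m₀ := factorAt_length
  have hΘg' : Θ g' = g' := by
    apply h1 p ⟨i + k₁, by
        show p = factorAt v (i + k₁) p.length
        rw [hplen]; exact hpfac⟩
      hpne g' ⟨i + m₀, by show g' = factorAt v (i + m₀) g'.length; rw [hg'len]⟩
    · -- prefix
      have htake : g'.take p.length = p := by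
        rw [hg'def, factorAt_take (by omega : p.length ≤ m + 1 - m₀)]
        exact hm₀P.symm
      have := List.take_prefix p.length g'
      rwa [htake] at this
    · -- suffix
      rw [hk₁pal]
      have hdrop : g'.drop (k₁ - m₀) = p := by
        rw [hg'def, factorAt_drop]
        have e1 : i + m₀ + (k₁ - m₀) = i + k₁ := by omega
        have e2 : m + 1 - m₀ - (k₁ - m₀) = m + 1 - k₁ := by omega
        rw [e1, e2]
        exact hpfac.symm
      have := List.drop_suffix (k₁ - m₀) g'
      rwa [hdrop] at this
    · -- occurrences
      intro j' hj'
      have hj'' : OccursIn p g' j' := by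
        rcases hj' with h | h
        · exact h
        · rwa [hk₁pal] at h
      rw [hg'def] at hj''
      obtain ⟨hle', heq'⟩ := occursIn_factorAt.mp hj''
      rw [hg'len]
      have hsum : m₀ + j' ≤ k₁ := by rw [hplen] at hle'; omega
      rcases eq_or_lt_of_le hsum with heq2 | hlt2
      · right; rw [hplen]; omega
      · left
        by_contra hj'0
        have : m₀ < m₀ + j' := by omega
        exact hm₀max (m₀ + j') this (by omega)
          (by rw [← add_assoc]; exact heq')
  -- contradiction with minimality of k₁
  apply hk₁min m₀ hm₀k₁
  constructor
  · omega
  · have : F.drop m₀ = g' := by rw [hF, factorAt_drop, hg'def]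
    rw [this]
    exact hΘg'

end RichAux5

/-- **Sufficient condition for `Θ`-richness** (Proposition 12 of [Sta2010]):
if (i) every factor beginning with a non-empty factor `w`, ending with `Θ(w)`
and with no other occurrences of `w` or `Θ(w)` is a `Θ`-palindrome, and
(ii) for every letter `b` with `b ≠ Θ(b)` the occurrences of `b` and `Θ(b)`
alternate, then `v` is `Θ`-rich. -/
theorem rich_of_return_palindromes_and_letter_alternation
    {B : Type*} [Fintype B] (Θ : List B → List B) (hΘ : IsAntimorphism Θ)
    (v : ℕ → B)
    (h1 : ∀ w : List B, IsFactorOf w v → w ≠ [] →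
      ∀ f : List B, IsFactorOf f v → w <+: f → Θ w <:+ f →
        (∀ i : ℕ, OccursIn w f i ∨ OccursIn (Θ w) f i → i = 0 ∨ i = f.length - w.length) →
        Θ f = f)
    (h2 : ∀ b : B, [b] ≠ Θ [b] → AlternateIn v [b] (Θ [b])) :
    RichWord Θ v := by
  classical
  have key : ∀ n i, (palSet Θ (factorAt v i n)).ncard + gammaTheta Θ (factorAt v i n) = n + 1 := by
    intro n
    induction n with
    | zero =>
      intro i
      have h0 : factorAt v i 0 = [] := by simp [factorAt]
      rw [h0, palSet_nil hΘ, gamma_nil, Set.ncard_singleton]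
    | succ m ih =>
      intro i
      set q := factorAt v i m with hqdef
      set b := v (i + m) with hbdef
      have hf : factorAt v i (m + 1) = q ++ [b] := factorAt_succ
      obtain ⟨b', hb'⟩ := theta_singleton hΘ b
      rw [hf]
      by_cases hcase : Θ [b] = [b] ∨ b ∈ q ∨ b' ∈ q
      · -- a new palindrome appears
        have hγ := gamma_append_same hΘ hb' hcase
        obtain ⟨p, hpf, hpq⟩ : ∃ p, p ∈ palSet Θ (q ++ [b]) ∧ p ∉ palSet Θ q := by
          rw [← hf]
          exact exists_new_pal hΘ h1 (exists_pal_suffix hΘ h1 h2 hb' hcase)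
        have hins : palSet Θ (q ++ [b]) = insert p (palSet Θ q) := by
          ext r
          constructor
          · intro hr
            by_cases hrq : r ∈ palSet Θ q
            · exact Set.mem_insert_iff.mpr (Or.inr hrq)
            · exact Set.mem_insert_iff.mpr (Or.inl (new_pal_unique hΘ hr hrq hpf hpq))
          · rintro (rfl | hr)
            · exact hpf
            · exact palSet_mono ⟨[], [b], by simp⟩ hr
        rw [hins, Set.ncard_insert_of_notMem hpq (palSet_finite Θ q), hγ]
        have := ih i
        rw [← hqdef] at this
        omega
      · push_neg at hcase
        obtain ⟨hne, hbq, hb'q⟩ := hcase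
        rw [no_new_pal_newpair hΘ hb' hne hbq hb'q, gamma_append_new hb' hne hbq hb'q]
        have := ih i
        rw [← hqdef] at this
        omega
  intro w hw
  obtain ⟨i, hi⟩ := hw
  have hkey := key w.length i
  rw [show factorAt v i w.length = w from hi.symm] at hkey
  unfold defect
  omega
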